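/- arXiv:1906.02662 — 3 statements merged into one kernel-verified Lean document; each statement's English description precedes it below -/
import Mathlib

section
/- Let n ≥ 1 and consider ℂ^{n+2} with orthonormal basis e_X, e_1, …, e_n, e_Y. Let H₁ = J ∑_i (|e_X⟩⟨e_i| + h.c.) and H₂ = J ∑_i (|e_i⟩⟨e_Y| + h.c.) with J > 0, and set T = π/(J√n). Then |⟨e_Y, e^{−i H₂ T/2} e^{−i H₁ T/2} e_X⟩| = 1, i.e., the two-step protocol achieves perfect state transfer from X to Y in total time T. -/
/-!
On the span of the hub vector `e_c` and the unnormalized W state `w = ∑ᵢ eᵢ`, the star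
Hamiltonian with hub `c` acts by `H e_c = J w` and `H w = n J e_c`. Hence `H² = n J²` there, and
`exp (-i θ H)` rotates this plane with frequency `ω = J √n`. At `θ ω = π / 2` the first stage sends
`e_X ↦ -i w / √n`, the second sends `w ↦ -i √n e_Y`, and the amplitude at `Y` is `-1`.
-/

open scoped Matrix Nat

section Rotation

variable {m : Type*} [Fintype m] [DecidableEq m] {A : Matrix m m ℂ} {u v : m → ℂ} {a b : ℂ}

theorem pow_mulVec_of_mulVec_swap (hAu : A *ᵥ u = a • v) (hAv : A *ᵥ v = b • u) (k : ℕ) :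
    A ^ (2 * k) *ᵥ u = (a * b) ^ k • u ∧ A ^ (2 * k + 1) *ᵥ u = ((a * b) ^ k * a) • v := by
  have hodd : ∀ k : ℕ, A ^ (2 * k) *ᵥ u = (a * b) ^ k • u →
      A ^ (2 * k + 1) *ᵥ u = ((a * b) ^ k * a) • v := fun k h => by
    rw [pow_succ', ← Matrix.mulVec_mulVec, h, Matrix.mulVec_smul, hAu, smul_smul]
  have heven : ∀ k : ℕ, A ^ (2 * k) *ᵥ u = (a * b) ^ k • u := fun k => by
    induction k with
    | zero => simp
    | succ k ih =>
      rw [show 2 * (k + 1) = 2 * k + 1 + 1 by ring, pow_succ', ← Matrix.mulVec_mulVec, hodd k ih,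
        Matrix.mulVec_smul, hAv, smul_smul, pow_succ]
      ring_nf
  exact ⟨heven k, hodd k (heven k)⟩

attribute [local instance] Matrix.linftyOpNormedRing Matrix.linftyOpNormedAlgebra

theorem hasSum_expSeries_mulVec (A : Matrix m m ℂ) (u : m → ℂ) :
    HasSum (fun k : ℕ => ((k ! : ℂ)⁻¹ • A ^ k) *ᵥ u) (NormedSpace.exp A *ᵥ u) :=
  (NormedSpace.exp_series_hasSum_exp' (𝕂 := ℂ) A).map ((Matrix.mulVecBilin ℂ ℂ).flip u)
    (LinearMap.continuous_of_finiteDimensional _)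

theorem exp_mulVec_of_mulVec_swap (θ ω : ℂ) (hω : ω ≠ 0) (hab : a * b = ω ^ 2)
    (hAu : A *ᵥ u = a • v) (hAv : A *ᵥ v = b • u) :
    NormedSpace.exp (-(Complex.I * θ) • A) *ᵥ u
      = Complex.cos (θ * ω) • u + (-Complex.I * (a / ω) * Complex.sin (θ * ω)) • v := by
  have hz : ∀ k : ℕ, (-(Complex.I * θ)) ^ (2 * k) = (-1) ^ k * θ ^ (2 * k) := fun k => by
    rw [pow_mul, pow_mul, neg_sq, mul_pow, Complex.I_sq, mul_pow]
  have hpow := pow_mulVec_of_mulVec_swap hAu hAv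
  have heven : HasSum (fun k : ℕ => (((2 * k)! : ℂ)⁻¹ • (-(Complex.I * θ) • A) ^ (2 * k)) *ᵥ u)
      (Complex.cos (θ * ω) • u) := by
    refine ((Complex.hasSum_cos (θ * ω)).smul_const u).congr_fun fun k => ?_
    rw [smul_pow, Matrix.smul_mulVec, Matrix.smul_mulVec, (hpow k).1, smul_smul, smul_smul, hz,
      hab, ← pow_mul, mul_pow]
    congr 1
    ring
  have hodd : HasSum
      (fun k : ℕ => (((2 * k + 1)! : ℂ)⁻¹ • (-(Complex.I * θ) • A) ^ (2 * k + 1)) *ᵥ u)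
      ((-Complex.I * (a / ω) * Complex.sin (θ * ω)) • v) := by
    refine (((Complex.hasSum_sin (θ * ω)).mul_left (-Complex.I * (a / ω))).smul_const v).congr_fun
      fun k => ?_
    rw [smul_pow, Matrix.smul_mulVec, Matrix.smul_mulVec, (hpow k).2, smul_smul, smul_smul,
      pow_succ, hz, hab, ← pow_mul, mul_pow]
    congr 1
    field_simp
    ring
  exact (hasSum_expSeries_mulVec _ u).unique (heven.even_add_odd hodd)

theorem exp_mulVec_of_mulVec_swap_of_mul_eq_pi_div_two (θ ω : ℂ) (hω : ω ≠ 0)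
    (hab : a * b = ω ^ 2) (hAu : A *ᵥ u = a • v) (hAv : A *ᵥ v = b • u)
    (hθ : θ * ω = (Real.pi / 2 : ℝ)) :
    NormedSpace.exp (-(Complex.I * θ) • A) *ᵥ u = (-Complex.I * (a / ω)) • v := by
  rw [exp_mulVec_of_mulVec_swap θ ω hω hab hAu hAv, hθ, ← Complex.ofReal_cos,
    ← Complex.ofReal_sin, Real.cos_pi_div_two, Real.sin_pi_div_two]
  simp

end Rotation

section Star

variable {ι β : Type*} [Fintype ι]

theorem sq_ofReal_sqrt_card : ((Real.sqrt (Fintype.card ι) : ℝ) : ℂ) ^ 2 = Fintype.card ι := by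
  rw [← Complex.ofReal_pow, Real.sq_sqrt (Nat.cast_nonneg _), Complex.ofReal_natCast]

theorem ofReal_sqrt_card_ne_zero [Nonempty ι] : ((Real.sqrt (Fintype.card ι) : ℝ) : ℂ) ≠ 0 := by
  simp [Fintype.card_ne_zero]

variable [DecidableEq ι] [Fintype β] [DecidableEq β]

def starHamiltonian (c : β) (J : ℂ) : Matrix (ι ⊕ β) (ι ⊕ β) ℂ := fun i j =>
  if (i = Sum.inr c ∧ ∃ k, j = Sum.inl k) ∨ ((∃ k, i = Sum.inl k) ∧ j = Sum.inr c) then J else 0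

/-- The W state, unnormalized. -/
def wState : ι ⊕ β → ℂ := Sum.elim 1 0

theorem starHamiltonian_mulVec_single (c : β) (J : ℂ) :
    starHamiltonian c J *ᵥ Pi.single (Sum.inr c) 1 = J • (wState : ι ⊕ β → ℂ) := by
  ext (k | b) <;> simp [starHamiltonian, wState, Matrix.mulVec_single]

theorem starHamiltonian_mulVec_wState (c : β) (J : ℂ) :
    starHamiltonian c J *ᵥ (wState : ι ⊕ β → ℂ)
      = (Fintype.card ι * J) • Pi.single (Sum.inr c) 1 := by
  ext (k | b) <;> simp [starHamiltonian, wState, Matrix.mulVec, dotProduct, Pi.single_apply]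

variable [Nonempty ι] {J θ : ℂ}

theorem exp_starHamiltonian_mulVec_single (c : β) (hJ : J ≠ 0)
    (hθ : θ * (J * (Real.sqrt (Fintype.card ι) : ℝ)) = (Real.pi / 2 : ℝ)) :
    NormedSpace.exp (-(Complex.I * θ) • starHamiltonian c J) *ᵥ Pi.single (Sum.inr c) 1
      = (-Complex.I / (Real.sqrt (Fintype.card ι) : ℝ)) • (wState : ι ⊕ β → ℂ) := by
  have hs := ofReal_sqrt_card_ne_zero (ι := ι)
  rw [exp_mulVec_of_mulVec_swap_of_mul_eq_pi_div_two θ _ (mul_ne_zero hJ hs)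
    (by rw [mul_pow, sq_ofReal_sqrt_card]; ring) (starHamiltonian_mulVec_single c J)
    (starHamiltonian_mulVec_wState c J) hθ]
  field_simp

theorem exp_starHamiltonian_mulVec_wState (c : β) (hJ : J ≠ 0)
    (hθ : θ * (J * (Real.sqrt (Fintype.card ι) : ℝ)) = (Real.pi / 2 : ℝ)) :
    NormedSpace.exp (-(Complex.I * θ) • starHamiltonian c J) *ᵥ (wState : ι ⊕ β → ℂ)
      = (-Complex.I * (Real.sqrt (Fintype.card ι) : ℝ)) • Pi.single (Sum.inr c) 1 := by
  have hs := ofReal_sqrt_card_ne_zero (ι := ι)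
  rw [exp_mulVec_of_mulVec_swap_of_mul_eq_pi_div_two θ _ (mul_ne_zero hJ hs)
    (by rw [mul_pow, sq_ofReal_sqrt_card]; ring) (starHamiltonian_mulVec_wState c J)
    (starHamiltonian_mulVec_single c J) hθ]
  congr 2
  field_simp
  rw [sq_ofReal_sqrt_card]

end Star

/- Sites: `Sum.inl k` are the `n` intermediate sites, `Sum.inr false` is `X`,
`Sum.inr true` is `Y`. -/
theorem stmt6 (n : ℕ) (hn : 1 ≤ n) (J : ℝ) (hJ : 0 < J)
    (H1 H2 : Matrix (Fin n ⊕ Bool) (Fin n ⊕ Bool) ℂ)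
    (hH1 : ∀ i j, H1 i j =
      if (i = Sum.inr false ∧ ∃ k, j = Sum.inl k) ∨
         ((∃ k, i = Sum.inl k) ∧ j = Sum.inr false) then (J : ℂ) else 0)
    (hH2 : ∀ i j, H2 i j =
      if (i = Sum.inr true ∧ ∃ k, j = Sum.inl k) ∨
         ((∃ k, i = Sum.inl k) ∧ j = Sum.inr true) then (J : ℂ) else 0)
    (eX : Fin n ⊕ Bool → ℂ) (heX : eX = fun i => if i = Sum.inr false then 1 else 0)
    (T : ℝ) (hT : T = Real.pi / (J * Real.sqrt n)) :
    ‖((NormedSpace.exp ((-(Complex.I * (T / 2))) • H2)).mulVec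
        ((NormedSpace.exp ((-(Complex.I * (T / 2))) • H1)).mulVec eX))
      (Sum.inr true)‖ = 1 := by
  obtain rfl : H1 = starHamiltonian false J := Matrix.ext fun i j => by
    rw [hH1, starHamiltonian]; congr
  obtain rfl : H2 = starHamiltonian true J := Matrix.ext fun i j => by
    rw [hH2, starHamiltonian]; congr
  obtain rfl : eX = Pi.single (Sum.inr false) 1 := by
    rw [heX]; ext i; simp [Pi.single_apply]
  have : Nonempty (Fin n) := ⟨⟨0, hn⟩⟩
  have hsqrt : Real.sqrt n ≠ 0 := by positivity
  have hJ' : (J : ℂ) ≠ 0 := Complex.ofReal_ne_zero.2 hJ.ne'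
  have hθ : (T / 2 : ℂ) * (J * (Real.sqrt (Fintype.card (Fin n)) : ℝ)) = (Real.pi / 2 : ℝ) := by
    have := Complex.ofReal_ne_zero.2 hsqrt
    rw [Fintype.card_fin, hT]
    push_cast
    field_simp
  rw [exp_starHamiltonian_mulVec_single false hJ' hθ, Matrix.mulVec_smul,
    exp_starHamiltonian_mulVec_wState true hJ' hθ]
  simp [hsqrt]
end

section
/- Let (σ^z_j)_{j=1}^N be the Pauli-Z operators on (ℂ²)^{⊗N}, let J_j ∈ ℝ, and define H = ∑_{j=2}^N J_j σ^z_1 σ^z_j. Let A = σ⁺_1 and B = ⊗_{j=2}^N σ⁺_j, and let ψ = (|0⟩^{⊗N} + |1⟩^{⊗N})/√2 (the GHZ state). Then ⟨ψ, [e^{iHt} A e^{−iHt}, B] ψ⟩ = (i/2)(e^{2it∑_j J_j} − e^{−2it∑_j J_j})·(phase), and in particular |⟨ψ, [A(t), B] ψ⟩| = |sin(2t ∑_{j=2}^N J_j)|. -/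
/-!
`H` is diagonal in the computational basis with energies `E`, so conjugation by `e^{iHt}`
multiplies the `(s, u)` entry of `σ⁺` by `e^{it(E s - E u)}`. In the GHZ state only two terms of
`⟨ψ, [A(t), B] ψ⟩` survive: `B` sends `|1…1⟩` to `|10…0⟩` and `⟨0…0|` to `⟨01…1|`, and `A(t)`
links `⟨0…0|` with `|10…0⟩` and `⟨01…1|` with `|1…1⟩`. Flipping the first spin against all others
changes the energy by `∓2∑_j J_j`, so the expectation is `(e^{iθ} - e^{-iθ}) / 2 = i sin θ`
with `θ = 2t∑_j J_j`.
-/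

open Matrix Finset Function

theorem Matrix.exp_smul_diagonal {n : Type*} [Fintype n] [DecidableEq n] (c : ℂ) (d : n → ℂ) :
    NormedSpace.exp (c • diagonal d) = diagonal fun s => Complex.exp (c * d s) := by
  rw [← diagonal_smul, exp_diagonal, Pi.exp_def, ← Complex.exp_eq_exp_ℂ]
  rfl

theorem Matrix.exp_conj_diagonal_apply {n : Type*} [Fintype n] [DecidableEq n] (c : ℂ)
    (d : n → ℂ) (A : Matrix n n ℂ) (s u : n) :
    (NormedSpace.exp (c • diagonal d) * A * NormedSpace.exp ((-c) • diagonal d)) s u =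
      Complex.exp (c * (d s - d u)) * A s u := by
  rw [exp_smul_diagonal, exp_smul_diagonal, mul_diagonal, diagonal_mul, mul_sub,
    sub_eq_add_neg, Complex.exp_add]
  ring_nf

theorem Complex.norm_half_mul_exp_mul_I_sub_exp_neg (x : ℝ) :
    ‖(1 / 2 : ℂ) * (Complex.exp (x * I) - Complex.exp (-x * I))‖ = |Real.sin x| := by
  have h : (1 / 2 : ℂ) * (Complex.exp (x * I) - Complex.exp (-x * I)) = Real.sin x * I := by
    rw [ofReal_sin, ← mul_right_inj' (two_ne_zero' ℂ), ← mul_assoc _ (sin _), two_sin,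
      mul_assoc, I_mul_I]
    ring
  rw [h, norm_mul, norm_real, norm_I, mul_one, Real.norm_eq_abs]

variable {ι : Type*} [Fintype ι]

noncomputable def ghz : (ι → Fin 2) → ℂ := fun s =>
  if (∀ k, s k = 0) ∨ (∀ k, s k = 1) then ((1 / Real.sqrt 2 : ℝ) : ℂ) else 0

theorem ghz_eq_smul_single_add_single [Nonempty ι] :
    (ghz : (ι → Fin 2) → ℂ) = ((1 / Real.sqrt 2 : ℝ) : ℂ) • (Pi.single 0 1 + Pi.single 1 1) := by
  have h01 : (0 : ι → Fin 2) ≠ 1 := fun h => by simpa using congrFun h (Classical.arbitrary ι)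
  ext s
  by_cases h0 : s = 0
  · subst h0
    simp [ghz, h01]
  by_cases h1 : s = 1
  · subst h1
    simp [ghz, h01.symm]
  have : ¬((∀ k, s k = 0) ∨ ∀ k, s k = 1) := by
    rintro (h | h)
    exacts [h0 (funext h), h1 (funext h)]
  simp [ghz, this, h0, h1]

theorem star_ghz : star (ghz : (ι → Fin 2) → ℂ) = ghz := by
  ext s
  simp only [ghz, Pi.star_apply]
  split <;> simp

variable [DecidableEq ι]

theorem ghz_dotProduct [Nonempty ι] (v : (ι → Fin 2) → ℂ) :
    ghz ⬝ᵥ v = ((1 / Real.sqrt 2 : ℝ) : ℂ) * (v 0 + v 1) := by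
  simp [ghz_eq_smul_single_add_single, smul_dotProduct, add_dotProduct, single_dotProduct, mul_add]

def spin (a : Fin 2) : ℂ := if a = 0 then 1 else -1

theorem spin_mul_spin (a b : Fin 2) : spin a * spin b = if a = b then 1 else -1 := by
  fin_cases a <;> fin_cases b <;> simp [spin]

def isingEnergy (J : ι → ℝ) (i₀ : ι) (s : ι → Fin 2) : ℂ :=
  ∑ j ∈ univ.filter (· ≠ i₀), (J j : ℂ) * (spin (s i₀) * spin (s j))

theorem sum_smul_pauliZ_mul_pauliZ (J : ι → ℝ) (i₀ : ι) :
    ∑ j ∈ univ.filter (· ≠ i₀), (J j : ℂ) •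
        ((diagonal fun s : ι → Fin 2 => spin (s i₀)) * diagonal fun s => spin (s j)) =
      diagonal (isingEnergy J i₀) := by
  ext s u
  by_cases h : s = u
  · subst h
    simp [Matrix.sum_apply, diagonal_mul_diagonal, isingEnergy]
  · simp [Matrix.sum_apply, diagonal_mul_diagonal, h]

theorem isingEnergy_of_aligned {J : ι → ℝ} {i₀ : ι} {s : ι → Fin 2}
    (hs : ∀ j, j ≠ i₀ → s j = s i₀) :
    isingEnergy J i₀ s = ((∑ j ∈ univ.filter (· ≠ i₀), J j : ℝ) : ℂ) := by
  rw [Complex.ofReal_sum]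
  refine sum_congr rfl fun j hj => ?_
  rw [spin_mul_spin, if_pos (hs j (mem_filter.mp hj).2).symm, mul_one]

theorem isingEnergy_of_antialigned {J : ι → ℝ} {i₀ : ι} {s : ι → Fin 2}
    (hs : ∀ j, j ≠ i₀ → s j ≠ s i₀) :
    isingEnergy J i₀ s = -((∑ j ∈ univ.filter (· ≠ i₀), J j : ℝ) : ℂ) := by
  rw [Complex.ofReal_sum, ← sum_neg_distrib]
  refine sum_congr rfl fun j hj => ?_
  rw [spin_mul_spin, if_neg (hs j (mem_filter.mp hj).2).symm, mul_neg_one]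

def sigmaPlus (i₀ : ι) : Matrix (ι → Fin 2) (ι → Fin 2) ℂ :=
  of fun s u => if s i₀ = 0 ∧ u i₀ = 1 ∧ (∀ k, k ≠ i₀ → s k = u k) then 1 else 0

theorem sigmaPlus_apply_update {i₀ : ι} {s : ι → Fin 2} (hs : s i₀ = 0) :
    sigmaPlus i₀ s (update s i₀ 1) = 1 :=
  if_pos ⟨hs, by simp, fun _ hk => (update_of_ne hk _ _).symm⟩

theorem sigmaPlus_apply_of_left_eq_one {i₀ : ι} {s u : ι → Fin 2} (hs : s i₀ = 1) :
    sigmaPlus i₀ s u = 0 :=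
  if_neg fun h => by simp [hs] at h

theorem sigmaPlus_apply_of_right_eq_zero {i₀ : ι} {s u : ι → Fin 2} (hu : u i₀ = 0) :
    sigmaPlus i₀ s u = 0 :=
  if_neg fun h => by simp [hu] at h

/-- `⊗_{j ≠ i₀} σ⁺_j`. -/
def sigmaPlusAway (i₀ : ι) : Matrix (ι → Fin 2) (ι → Fin 2) ℂ :=
  of fun s u => if (∀ j, j ≠ i₀ → s j = 0 ∧ u j = 1) ∧ s i₀ = u i₀ then 1 else 0

theorem sigmaPlusAway_mulVec_ghz {i₀ : ι} (h : ∃ j, j ≠ i₀) :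
    sigmaPlusAway i₀ *ᵥ ghz =
      ((1 / Real.sqrt 2 : ℝ) : ℂ) • Pi.single (update (0 : ι → Fin 2) i₀ 1) 1 := by
  have : Nonempty ι := ⟨i₀⟩
  rw [ghz_eq_smul_single_add_single, mulVec_smul, mulVec_add, mulVec_single_one, mulVec_single_one]
  congr 1
  ext s
  simp [sigmaPlusAway, Pi.single_apply, eq_update_iff, and_comm, h]

theorem ghz_vecMul_sigmaPlusAway {i₀ : ι} (h : ∃ j, j ≠ i₀) :
    ghz ᵥ* sigmaPlusAway i₀ =
      ((1 / Real.sqrt 2 : ℝ) : ℂ) • Pi.single (update (1 : ι → Fin 2) i₀ 0) 1 := by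
  have : Nonempty ι := ⟨i₀⟩
  rw [ghz_eq_smul_single_add_single, smul_vecMul, add_vecMul, single_one_vecMul, single_one_vecMul]
  congr 1
  ext u
  have h' : ∃ j, i₀ ≠ j := h.imp fun _ => Ne.symm
  simp [sigmaPlusAway, Pi.single_apply, eq_update_iff, and_comm, eq_comm, h']

theorem ghz_expectation_commutator_sigmaPlusAway {i₀ : ι} (h : ∃ j, j ≠ i₀)
    (X : Matrix (ι → Fin 2) (ι → Fin 2) ℂ) :
    star ghz ⬝ᵥ (X * sigmaPlusAway i₀ - sigmaPlusAway i₀ * X) *ᵥ ghz =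
      1 / 2 * (X 0 (update 0 i₀ 1) + X 1 (update 0 i₀ 1) -
        (X (update 1 i₀ 0) 0 + X (update 1 i₀ 0) 1)) := by
  have : Nonempty ι := ⟨i₀⟩
  have hr : ((1 / √2 : ℝ) : ℂ) * ((1 / √2 : ℝ) : ℂ) = 1 / 2 := by
    rw [← Complex.ofReal_mul, div_mul_div_comm, one_mul, Real.mul_self_sqrt zero_le_two]
    norm_num
  rw [star_ghz, sub_mulVec, dotProduct_sub, ← mulVec_mulVec, ← mulVec_mulVec,
    dotProduct_mulVec ghz (sigmaPlusAway i₀), sigmaPlusAway_mulVec_ghz h,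
    ghz_vecMul_sigmaPlusAway h, mulVec_smul, mulVec_single_one, ghz_dotProduct,
    smul_dotProduct, single_one_dotProduct, mulVec, dotProduct_comm, ghz_dotProduct]
  simp only [Pi.smul_apply, col_apply, smul_eq_mul, ← hr]
  ring

theorem ghz_expectation_commutator_conj_sigmaPlus {i₀ : ι} (h : ∃ j, j ≠ i₀)
    (E : (ι → Fin 2) → ℂ) (c : ℂ) :
    star ghz ⬝ᵥ
        ((NormedSpace.exp (c • diagonal E) * sigmaPlus i₀ * NormedSpace.exp ((-c) • diagonal E)) *
            sigmaPlusAway i₀ -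
          sigmaPlusAway i₀ *
            (NormedSpace.exp (c • diagonal E) * sigmaPlus i₀ *
              NormedSpace.exp ((-c) • diagonal E))) *ᵥ
        ghz =
      1 / 2 * (Complex.exp (c * (E 0 - E (update 0 i₀ 1))) -
        Complex.exp (c * (E (update 1 i₀ 0) - E 1))) := by
  have h0p : sigmaPlus i₀ 0 (update 0 i₀ 1) = 1 := sigmaPlus_apply_update rfl
  have hq1 : sigmaPlus i₀ (update 1 i₀ 0) 1 = 1 := by
    simpa using sigmaPlus_apply_update (i₀ := i₀) (s := update 1 i₀ 0) (by simp)
  have h1p : sigmaPlus i₀ 1 (update 0 i₀ 1) = 0 := sigmaPlus_apply_of_left_eq_one rfl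
  have hq0 : sigmaPlus i₀ (update 1 i₀ 0) 0 = 0 := sigmaPlus_apply_of_right_eq_zero rfl
  simp only [ghz_expectation_commutator_sigmaPlusAway h, exp_conj_diagonal_apply, h0p, hq1, h1p,
    hq0, mul_zero, mul_one, add_zero, zero_add]

theorem stmt10_general (N : ℕ) (hN : 2 ≤ N) (J : Fin N → ℝ) (t : ℝ)
    (i₀ : Fin N)
    (Z : Fin N → Matrix (Fin N → Fin 2) (Fin N → Fin 2) ℂ)
    (hZ : ∀ j, Z j = Matrix.diagonal fun s => if s j = 0 then 1 else -1)
    (H : Matrix (Fin N → Fin 2) (Fin N → Fin 2) ℂ)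
    (hH : H = ∑ j ∈ Finset.univ.filter (· ≠ i₀), (J j : ℂ) • (Z i₀ * Z j))
    (A B : Matrix (Fin N → Fin 2) (Fin N → Fin 2) ℂ)
    (hA : ∀ s u, A s u =
      if s i₀ = 0 ∧ u i₀ = 1 ∧ (∀ k, k ≠ i₀ → s k = u k) then 1 else 0)
    (hB : ∀ s u, B s u =
      if (∀ j, j ≠ i₀ → s j = 0 ∧ u j = 1) ∧ s i₀ = u i₀ then 1 else 0)
    (ψ : (Fin N → Fin 2) → ℂ)
    (hψ : ψ = fun s =>
      if (∀ k, s k = 0) ∨ (∀ k, s k = 1) then ((1 / Real.sqrt 2 : ℝ) : ℂ) else 0)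
    (At : Matrix (Fin N → Fin 2) (Fin N → Fin 2) ℂ)
    (hAt : At = NormedSpace.exp ((Complex.I * t) • H) * A *
      NormedSpace.exp ((-(Complex.I * t)) • H)) :
    ‖dotProduct (star ψ) ((At * B - B * At).mulVec ψ)‖ =
      |Real.sin (2 * t * ∑ j ∈ Finset.univ.filter (· ≠ i₀), J j)| := by
  have hsite : ∃ j, j ≠ i₀ :=
    Fintype.exists_ne_of_one_lt_card (by rw [Fintype.card_fin]; omega) i₀
  obtain rfl : Z = fun j => diagonal fun s => spin (s j) := funext hZ
  obtain rfl : H = diagonal (isingEnergy J i₀) := hH.trans (sum_smul_pauliZ_mul_pauliZ J i₀)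
  -- `congr!` reconciles the `Decidable` instances for `Fin N` with the generic ones
  obtain rfl : A = sigmaPlus i₀ := by ext s u; rw [hA, sigmaPlus, of_apply]; congr!
  obtain rfl : B = sigmaPlusAway i₀ := by ext s u; rw [hB, sigmaPlusAway, of_apply]; congr!
  obtain rfl : ψ = ghz := by rw [hψ]; unfold ghz; congr!
  set S := ∑ j ∈ univ.filter (· ≠ i₀), J j
  have hE0 : isingEnergy J i₀ 0 = S := isingEnergy_of_aligned fun _ _ => rfl
  have hE1 : isingEnergy J i₀ 1 = S := isingEnergy_of_aligned fun _ _ => rfl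
  have hEp : isingEnergy J i₀ (update 0 i₀ 1) = -S :=
    isingEnergy_of_antialigned fun j hj => by simp [hj]
  have hEq : isingEnergy J i₀ (update 1 i₀ 0) = -S :=
    isingEnergy_of_antialigned fun j hj => by simp [hj]
  rw [hAt, ghz_expectation_commutator_conj_sigmaPlus hsite, hE0, hE1, hEp, hEq,
    ← Complex.norm_half_mul_exp_mul_I_sub_exp_neg]
  congr 4 <;> push_cast <;> ring

theorem stmt10 (N : ℕ) (hN : 2 ≤ N) (J : Fin N → ℝ) (t : ℝ)
    (i₀ : Fin N) (hi₀ : (i₀ : ℕ) = 0)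
    (Z : Fin N → Matrix (Fin N → Fin 2) (Fin N → Fin 2) ℂ)
    (hZ : ∀ j, Z j = Matrix.diagonal fun s => if s j = 0 then 1 else -1)
    (H : Matrix (Fin N → Fin 2) (Fin N → Fin 2) ℂ)
    (hH : H = ∑ j ∈ Finset.univ.filter (· ≠ i₀), (J j : ℂ) • (Z i₀ * Z j))
    (A B : Matrix (Fin N → Fin 2) (Fin N → Fin 2) ℂ)
    (hA : ∀ s u, A s u =
      if s i₀ = 0 ∧ u i₀ = 1 ∧ (∀ k, k ≠ i₀ → s k = u k) then 1 else 0)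
    (hB : ∀ s u, B s u =
      if (∀ j, j ≠ i₀ → s j = 0 ∧ u j = 1) ∧ s i₀ = u i₀ then 1 else 0)
    (ψ : (Fin N → Fin 2) → ℂ)
    (hψ : ψ = fun s =>
      if (∀ k, s k = 0) ∨ (∀ k, s k = 1) then ((1 / Real.sqrt 2 : ℝ) : ℂ) else 0)
    (At : Matrix (Fin N → Fin 2) (Fin N → Fin 2) ℂ)
    (hAt : At = NormedSpace.exp ((Complex.I * t) • H) * A *
      NormedSpace.exp ((-(Complex.I * t)) • H)) :
    ‖dotProduct (star ψ) ((At * B - B * At).mulVec ψ)‖ =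
      |Real.sin (2 * t * ∑ j ∈ Finset.univ.filter (· ≠ i₀), J j)| :=
  stmt10_general N hN J t i₀ Z hZ H hH A B hA hB ψ hψ At hAt
end

section
/- For the star hopping Hamiltonian H₁ = J ∑_{i=1}^n (|e_X⟩⟨e_i| + |e_i⟩⟨e_X|) on ℂ^{n+1}, the operator norm satisfies ‖H₁‖ = J√n, and the subspace span{e_X, w} with w = (1/√n)∑ e_i is invariant under H₁, on which H₁ acts as J√n · (|e_X⟩⟨w| + |w⟩⟨e_X|). -/
/-! Writing `u = ∑ᵢ eᵢ` for the sum of the leaf vectors (so `w = u / √n`), the Hamiltonian is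
`J (|e_X⟩⟨u| + |u⟩⟨e_X|)`: it sends `e_X ↦ J u` and `u ↦ n J e_X`, which makes `span {e_X, w}`
invariant. For the norm, `‖H v‖² = J² (|∑ᵢ vᵢ|² + n |v_X|²) ≤ J² n ‖v‖²` by Cauchy–Schwarz, and
`e_X` attains this bound because `‖u‖ = √n`. -/

open Finset

lemma norm_sum_sq_le_card_mul_sum_norm_sq {ι E : Type*} [Fintype ι] [SeminormedAddCommGroup E]
    (f : ι → E) : ‖∑ i, f i‖ ^ 2 ≤ Fintype.card ι * ∑ i, ‖f i‖ ^ 2 := by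
  calc ‖∑ i, f i‖ ^ 2 ≤ (∑ i, ‖f i‖) ^ 2 := by gcongr; exact norm_sum_le _ _
    _ ≤ Fintype.card ι * ∑ i, ‖f i‖ ^ 2 := by
      simpa using sq_sum_le_card_mul_sum_sq (s := univ) (f := fun i => ‖f i‖)

lemma Submodule.apply_mem_span_pair_of_apply_eq_smul {R M : Type*} [CommSemiring R]
    [AddCommMonoid M] [Module R M] {f : M →ₗ[R] M} {x y : M} {a b : R} (hx : f x = a • y)
    (hy : f y = b • x) {v : M} (hv : v ∈ span R {x, y}) : f v ∈ span R {x, y} := by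
  obtain ⟨c, d, rfl⟩ := mem_span_pair.1 hv
  exact mem_span_pair.2 ⟨d * b, c * a, by simp [hx, hy, mul_smul, add_comm]⟩

namespace StarHopping

variable {𝕜 ι : Type*} [RCLike 𝕜] [Fintype ι] [DecidableEq ι]

def starMatrix (J : 𝕜) : Matrix (Option ι) (Option ι) 𝕜 :=
  Matrix.of fun i j => if (i = none ∧ j ≠ none) ∨ (i ≠ none ∧ j = none) then J else 0

def hub : EuclideanSpace 𝕜 (Option ι) := EuclideanSpace.single none 1

def leafSum : EuclideanSpace 𝕜 (Option ι) := WithLp.toLp 2 fun i => i.elim 0 fun _ => 1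

noncomputable def leafUniform : EuclideanSpace 𝕜 (Option ι) :=
  ((Real.sqrt (Fintype.card ι))⁻¹ : 𝕜) • leafSum

local notation "T" J => Matrix.toEuclideanCLM (𝕜 := 𝕜) (starMatrix (ι := ι) J)

lemma toEuclideanCLM_starMatrix_apply_none (J : 𝕜) (v : EuclideanSpace 𝕜 (Option ι)) :
    (T J) v none = J * ∑ k, v (some k) := by
  simp [Matrix.mulVec, dotProduct, Fintype.sum_option, starMatrix, mul_sum]

lemma toEuclideanCLM_starMatrix_apply_some (J : 𝕜) (v : EuclideanSpace 𝕜 (Option ι)) (k : ι) :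
    (T J) v (some k) = J * v none := by
  simp [Matrix.mulVec, dotProduct, starMatrix]

lemma toEuclideanCLM_starMatrix_hub (J : 𝕜) : (T J) hub = J • leafSum := by
  ext (_ | k) <;>
    simp only [toEuclideanCLM_starMatrix_apply_none, toEuclideanCLM_starMatrix_apply_some] <;>
    simp [hub, leafSum]

lemma toEuclideanCLM_starMatrix_leafSum (J : 𝕜) :
    (T J) leafSum = (J * Fintype.card ι) • hub := by
  ext (_ | k) <;>
    simp only [toEuclideanCLM_starMatrix_apply_none, toEuclideanCLM_starMatrix_apply_some] <;>
    simp [hub, leafSum]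

omit [DecidableEq ι] in
lemma norm_leafSum : ‖(leafSum : EuclideanSpace 𝕜 (Option ι))‖ = Real.sqrt (Fintype.card ι) := by
  simp [EuclideanSpace.norm_eq, Fintype.sum_option, leafSum]

omit [DecidableEq ι] in
lemma sqrt_card_smul_leafUniform :
    (Real.sqrt (Fintype.card ι) : 𝕜) • (leafUniform : EuclideanSpace 𝕜 (Option ι)) = leafSum := by
  ext (_ | k)
  · simp [leafUniform, leafSum]
  · have : (Fintype.card ι : ℝ) ≠ 0 := by exact_mod_cast (Fintype.card_pos_iff.2 ⟨k⟩).ne'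
    simp [leafUniform, leafSum, this]

lemma norm_toEuclideanCLM_starMatrix_apply_sq (J : 𝕜) (v : EuclideanSpace 𝕜 (Option ι)) :
    ‖(T J) v‖ ^ 2 = ‖J‖ ^ 2 * (‖∑ k, v (some k)‖ ^ 2 + Fintype.card ι * ‖v none‖ ^ 2) := by
  rw [EuclideanSpace.norm_sq_eq, Fintype.sum_option]
  simp only [toEuclideanCLM_starMatrix_apply_none, toEuclideanCLM_starMatrix_apply_some, norm_mul,
    mul_pow, sum_const, card_univ, nsmul_eq_mul]
  ring

lemma norm_toEuclideanCLM_starMatrix_apply_le (J : 𝕜) (v : EuclideanSpace 𝕜 (Option ι)) :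
    ‖(T J) v‖ ≤ ‖J‖ * Real.sqrt (Fintype.card ι) * ‖v‖ := by
  refine le_of_sq_le_sq ?_ (by positivity)
  have hcs := norm_sum_sq_le_card_mul_sum_norm_sq fun k => v (some k)
  rw [norm_toEuclideanCLM_starMatrix_apply_sq, mul_pow, mul_pow, Real.sq_sqrt (Nat.cast_nonneg _),
    EuclideanSpace.norm_sq_eq, Fintype.sum_option]
  calc ‖J‖ ^ 2 * (‖∑ k, v (some k)‖ ^ 2 + Fintype.card ι * ‖v none‖ ^ 2)
      ≤ ‖J‖ ^ 2 * (Fintype.card ι * ∑ k, ‖v (some k)‖ ^ 2 + Fintype.card ι * ‖v none‖ ^ 2) := by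
        gcongr
    _ = ‖J‖ ^ 2 * Fintype.card ι * (‖v none‖ ^ 2 + ∑ k, ‖v (some k)‖ ^ 2) := by ring

lemma norm_toEuclideanCLM_starMatrix (J : 𝕜) : ‖T J‖ = ‖J‖ * Real.sqrt (Fintype.card ι) := by
  refine le_antisymm (ContinuousLinearMap.opNorm_le_bound _ (by positivity)
    (norm_toEuclideanCLM_starMatrix_apply_le J)) ?_
  have h := (T J).le_opNorm hub
  rwa [toEuclideanCLM_starMatrix_hub, norm_smul, norm_leafSum, hub, PiLp.norm_single, norm_one,
    mul_one] at h

lemma toEuclideanCLM_starMatrix_hub_eq_smul_leafUniform (J : 𝕜) :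
    (T J) hub = (J * Real.sqrt (Fintype.card ι)) • leafUniform := by
  rw [toEuclideanCLM_starMatrix_hub, ← sqrt_card_smul_leafUniform, smul_smul]

lemma toEuclideanCLM_starMatrix_leafUniform (J : 𝕜) :
    (T J) leafUniform = (J * Real.sqrt (Fintype.card ι)) • hub := by
  have hcard :
      (Fintype.card ι : 𝕜) = Real.sqrt (Fintype.card ι) * Real.sqrt (Fintype.card ι) := by
    rw [← RCLike.ofReal_mul, Real.mul_self_sqrt (Nat.cast_nonneg _), RCLike.ofReal_natCast]
  rw [leafUniform, map_smul, toEuclideanCLM_starMatrix_leafSum, smul_smul, hcard]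
  rcases eq_or_ne (Real.sqrt (Fintype.card ι) : 𝕜) 0 with h | h
  · simp [h]
  · field_simp

end StarHopping

open StarHopping in
theorem stmt15_general (n : ℕ) (J : ℝ) (hJ : 0 < J)
    (H : Matrix (Option (Fin n)) (Option (Fin n)) ℂ)
    (hH : ∀ i j, H i j =
      if (i = none ∧ j ≠ none) ∨ (i ≠ none ∧ j = none) then (J : ℂ) else 0)
    (eX w : EuclideanSpace ℂ (Option (Fin n)))
    (heX : ∀ i, eX i = if i = none then 1 else 0)
    (hw : ∀ i, w i = if i = none then 0 else ((1 / Real.sqrt n : ℝ) : ℂ)) :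
    ‖Matrix.toEuclideanCLM (𝕜 := ℂ) H‖ = J * Real.sqrt n ∧
    (∀ v : EuclideanSpace ℂ (Option (Fin n)),
      v ∈ Submodule.span ℂ {eX, w} →
        (Matrix.toEuclideanCLM (𝕜 := ℂ) H) v ∈ Submodule.span ℂ {eX, w}) ∧
    (Matrix.toEuclideanCLM (𝕜 := ℂ) H) eX = ((J * Real.sqrt n : ℝ) : ℂ) • w ∧
    (Matrix.toEuclideanCLM (𝕜 := ℂ) H) w = ((J * Real.sqrt n : ℝ) : ℂ) • eX := by
  obtain rfl : H = starMatrix (J : ℂ) := Matrix.ext hH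
  obtain rfl : eX = hub := by ext i; simp [heX, hub]
  obtain rfl : w = leafUniform := by ext (_ | k) <;> simp [hw, leafUniform, leafSum]
  have hhub := toEuclideanCLM_starMatrix_hub_eq_smul_leafUniform (ι := Fin n) (J : ℂ)
  have hleaf := toEuclideanCLM_starMatrix_leafUniform (ι := Fin n) (J : ℂ)
  simp only [Fintype.card_fin] at hhub hleaf
  push_cast
  refine ⟨?_, fun v => Submodule.apply_mem_span_pair_of_apply_eq_smul hhub hleaf, hhub, hleaf⟩
  simpa [abs_of_pos hJ] using norm_toEuclideanCLM_starMatrix (ι := Fin n) (J : ℂ)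

theorem stmt15 (n : ℕ) (hn : 1 ≤ n) (J : ℝ) (hJ : 0 < J)
    (H : Matrix (Option (Fin n)) (Option (Fin n)) ℂ)
    (hH : ∀ i j, H i j =
      if (i = none ∧ j ≠ none) ∨ (i ≠ none ∧ j = none) then (J : ℂ) else 0)
    (eX w : EuclideanSpace ℂ (Option (Fin n)))
    (heX : ∀ i, eX i = if i = none then 1 else 0)
    (hw : ∀ i, w i = if i = none then 0 else ((1 / Real.sqrt n : ℝ) : ℂ)) :
    ‖Matrix.toEuclideanCLM (𝕜 := ℂ) H‖ = J * Real.sqrt n ∧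
    (∀ v : EuclideanSpace ℂ (Option (Fin n)),
      v ∈ Submodule.span ℂ {eX, w} →
        (Matrix.toEuclideanCLM (𝕜 := ℂ) H) v ∈ Submodule.span ℂ {eX, w}) ∧
    (Matrix.toEuclideanCLM (𝕜 := ℂ) H) eX = ((J * Real.sqrt n : ℝ) : ℂ) • w ∧
    (Matrix.toEuclideanCLM (𝕜 := ℂ) H) w = ((J * Real.sqrt n : ℝ) : ℂ) • eX :=
  stmt15_general n J hJ H hH eX w heX hw
end
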